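/- An oriented graph with no induced P⁺(3) and no induced P⁺(1,1,1) contains no odd hole. -/

import Mathlib

/-- The underlying simple graph of a digraph given by its arc relation. -/
def underlying {V : Type*} (A : V → V → Prop) : SimpleGraph V where
  Adj x y := x ≠ y ∧ (A x y ∨ A y x)
  symm := by refine ⟨?_⟩; intro x y h; exact ⟨h.1.symm, h.2.symm⟩
  loopless := by refine ⟨?_⟩; intro x h; exact h.1 rfl

/-!
Orient each edge `v i v (i + 1)` of an odd cycle forwards or backwards. Since the cycle has odd
length, the orientations cannot alternate along the edges `v i v (i + 1)`, `v (i + 2) v (i + 3)`,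
`v (i + 4) v (i + 5)`, …, so some two edges at distance one point the same way. In a hole the
four vertices spanning them induce a path, and whatever the orientation of its middle edge, that
path is an induced `P⁺(3)` or `P⁺(1,1,1)`.
-/

def ContainsInducedDirectedP3 {V : Type*} (A : V → V → Prop) : Prop :=
  ∃ a b c d : V, A a b ∧ A b c ∧ A c d ∧
    ¬ (underlying A).Adj a c ∧ ¬ (underlying A).Adj a d ∧ ¬ (underlying A).Adj b d

/-- `P⁺(1,1,1)` is the path `a → b ← c → d`. -/
def ContainsInducedP111 {V : Type*} (A : V → V → Prop) : Prop :=
  ∃ a b c d : V, A a b ∧ A c b ∧ A c d ∧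
    ¬ (underlying A).Adj a c ∧ ¬ (underlying A).Adj a d ∧ ¬ (underlying A).Adj b d

theorem ZMod.exists_iff_add_of_odd {n : ℕ} (hn : Odd n) (a : ZMod n) (p : ZMod n → Prop) :
    ∃ i, p i ↔ p (i + a) := by
  by_contra! h
  have hflip : ∀ i, p (i + a) ↔ ¬ p i := fun i => by
    have := h i
    tauto
  have hperiod : ∀ (k : ℕ) (i : ZMod n), p (i + 2 * k * a) ↔ p i := by
    intro k
    induction k with
    | zero => simp
    | succ k ih =>
      intro i
      rw [show i + 2 * ↑(k + 1) * a = i + 2 * k * a + a + a by push_cast; ring, hflip, hflip, ih,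
        not_not]
  obtain ⟨m, rfl⟩ := hn
  have wrap : (0 : ZMod (2 * m + 1)) + 2 * m * a + a = 0 := by
    rw [zero_add, ← add_one_mul, show (2 * m + 1 : ZMod (2 * m + 1)) = ((2 * m + 1 : ℕ) : _) by
      push_cast; rfl, ZMod.natCast_self, zero_mul]
  have := hflip (0 + 2 * m * a)
  rw [wrap, hperiod] at this
  exact iff_not_self this

theorem ZMod.natCast_ne_zero_of_pos_of_lt {n k : ℕ} (hk : 0 < k) (hkn : k < n) :
    (k : ZMod n) ≠ 0 := by
  rw [ne_eq, ZMod.natCast_eq_zero_iff]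
  exact Nat.not_dvd_of_pos_of_lt hk hkn

theorem SimpleGraph.not_adj_add_of_isHole {V : Type*} {G : SimpleGraph V} {n : ℕ} {v : ZMod n → V}
    (hnon : ∀ i j : ZMod n, j ≠ i + 1 → i ≠ j + 1 → i ≠ j → ¬ G.Adj (v i) (v j))
    {k : ℕ} (hk : 2 ≤ k) (hkn : k + 2 ≤ n) (i : ZMod n) : ¬ G.Adj (v i) (v (i + k)) := by
  have hne : ∀ m : ℕ, 0 < m → m < n → ∀ x y : ZMod n, x = y + m → x ≠ y := by
    intro m hm hmn x y hxy h
    exact ZMod.natCast_ne_zero_of_pos_of_lt hm hmn (by linear_combination h - hxy)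
  refine hnon i (i + k) (hne (k - 1) (by omega) (by omega) _ _ ?_) ?_ ?_
  · rw [Nat.cast_sub (by omega)]
    ring
  · exact (hne (k + 1) (by omega) (by omega) _ _ (by push_cast; ring)).symm
  · exact (hne k (by omega) (by omega) _ _ rfl).symm

theorem false_of_induced_path {V : Type*} {A : V → V → Prop}
    (hP3 : ¬ ContainsInducedDirectedP3 A) (hP111 : ¬ ContainsInducedP111 A) {a b c d : V}
    (hab : A a b) (hbc : (underlying A).Adj b c) (hcd : A c d)
    (hac : ¬ (underlying A).Adj a c) (had : ¬ (underlying A).Adj a d)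
    (hbd : ¬ (underlying A).Adj b d) : False := by
  rcases hbc.2 with hbc | hcb
  · exact hP3 ⟨a, b, c, d, hab, hbc, hcd, hac, had, hbd⟩
  · exact hP111 ⟨a, b, c, d, hab, hcb, hcd, hac, had, hbd⟩

theorem stmt18_general {V : Type*} (A : V → V → Prop)
    (hP3 : ¬ ∃ a b c d : V, A a b ∧ A b c ∧ A c d ∧
      ¬ (underlying A).Adj a c ∧ ¬ (underlying A).Adj a d ∧
      ¬ (underlying A).Adj b d)
    (hP21 : ¬ ∃ a b c d : V, A a b ∧ A c b ∧ A c d ∧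
      ¬ (underlying A).Adj a c ∧ ¬ (underlying A).Adj a d ∧
      ¬ (underlying A).Adj b d) :
    ¬ ∃ (n : ℕ) (v : ZMod n → V), 5 ≤ n ∧ Odd n ∧
      Function.Injective v ∧
      (∀ i : ZMod n, (underlying A).Adj (v i) (v (i + 1))) ∧
      (∀ i j : ZMod n, j ≠ i + 1 → i ≠ j + 1 → i ≠ j →
        ¬ (underlying A).Adj (v i) (v j)) := by
  rintro ⟨n, v, h5, hodd, -, hadj, hnon⟩
  obtain ⟨i, hi⟩ := ZMod.exists_iff_add_of_odd hodd 2 fun j => A (v j) (v (j + 1))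
  have hnon02 := SimpleGraph.not_adj_add_of_isHole hnon (k := 2) le_rfl (by omega) i
  have hnon03 := SimpleGraph.not_adj_add_of_isHole hnon (k := 3) (by omega) (by omega) i
  have hnon13 := SimpleGraph.not_adj_add_of_isHole hnon (k := 2) le_rfl (by omega) (i + 1)
  have hmid := hadj (i + 1)
  have hlast := hadj (i + 2)
  rw [show i + 1 + 1 = i + 2 by ring] at hmid
  rw [show i + 2 + 1 = i + 3 by ring] at hi hlast
  push_cast at hnon02 hnon03 hnon13
  rw [show i + 1 + 2 = i + 3 by ring] at hnon13
  by_cases hfirst : A (v i) (v (i + 1))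
  · exact false_of_induced_path hP3 hP21 hfirst hmid (hi.mp hfirst) hnon02 hnon03 hnon13
  · exact false_of_induced_path hP3 hP21 (hlast.2.resolve_left (mt hi.mpr hfirst)) hmid.symm
      ((hadj i).2.resolve_left hfirst) (mt SimpleGraph.Adj.symm hnon13)
      (mt SimpleGraph.Adj.symm hnon03) (mt SimpleGraph.Adj.symm hnon02)

theorem stmt18 {V : Type*} [Fintype V] (A : V → V → Prop)
    (hasym : ∀ x y, A x y → ¬ A y x)
    (hP3 : ¬ ∃ a b c d : V, A a b ∧ A b c ∧ A c d ∧
      ¬ (underlying A).Adj a c ∧ ¬ (underlying A).Adj a d ∧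
      ¬ (underlying A).Adj b d)
    (hP21 : ¬ ∃ a b c d : V, A a b ∧ A c b ∧ A c d ∧
      ¬ (underlying A).Adj a c ∧ ¬ (underlying A).Adj a d ∧
      ¬ (underlying A).Adj b d) :
    ¬ ∃ (n : ℕ) (v : ZMod n → V), 5 ≤ n ∧ Odd n ∧
      Function.Injective v ∧
      (∀ i : ZMod n, (underlying A).Adj (v i) (v (i + 1))) ∧
      (∀ i j : ZMod n, j ≠ i + 1 → i ≠ j + 1 → i ≠ j →
        ¬ (underlying A).Adj (v i) (v j)) :=
  stmt18_general A hP3 hP21
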